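/- For all integers r ≥ 4 and n ≥ r+5, every n-vertex connected BP_4-free r-uniform hypergraph H satisfies e(H) ≤ max{(n−5)/(r−1) + 3, (n−4)/(r−2) + 2}, where e(H) is the number of hyperedges of H and the two terms are rational numbers. -/

import Mathlib

/-!
With edges of size at least four, a Berge path of length 4 exists as soon as four distinct edges
are chained through three distinct vertices. In a connected hypergraph with at least four edges and
no such chain there is a hub edge `d` containing every pairwise intersection of the other edges:
if two consecutive links `x ∈ c₁ ∩ c₂`, `y ∈ c₂ ∩ c₃` are distinct, `c₂` is one; otherwise all
edges pass through one vertex and every edge is a hub. The sets `e \ d` are then disjoint, so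
`n ≥ m r - S` with `S = ∑_{e ≠ d} |e ∩ d|`. Edges meeting `d` in at most two vertices add at most 2
to `S`. If at most two edges meet `d` in three or more vertices, each adds at most `r - 1`; if
there are at least three, each shares at most one vertex with the others, so together they add at
most `r` plus their number. Either way `S ≤ 2m + 2r - 8`, i.e. `(m - 2)(r - 2) ≤ n - 4`.
-/

namespace Berge

def IsBergePath {n : ℕ} (E : Finset (Finset (Fin n))) (k : ℕ)
    (v : Fin (k + 1) → Fin n) (f : Fin k → Finset (Fin n)) : Prop :=
  Function.Injective v ∧ Function.Injective f ∧ (∀ i, f i ∈ E) ∧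
    ∀ i : Fin k, v i.castSucc ∈ f i ∧ v i.succ ∈ f i

def HasBergePath {n : ℕ} (E : Finset (Finset (Fin n))) (k : ℕ) : Prop :=
  ∃ v f, IsBergePath E k v f

def BPFree {n : ℕ} (E : Finset (Finset (Fin n))) (k : ℕ) : Prop :=
  ¬ HasBergePath E k

def Connected {n : ℕ} (E : Finset (Finset (Fin n))) : Prop :=
  ∀ x y : Fin n, ∃ (k : ℕ) (v : Fin (k + 1) → Fin n) (f : Fin k → Finset (Fin n)),
    IsBergePath E k v f ∧ (∃ i, v i = x) ∧ (∃ i, v i = y)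

def Uniform {n : ℕ} (E : Finset (Finset (Fin n))) (r : ℕ) : Prop :=
  ∀ e ∈ E, e.card = r

noncomputable def exConn (n r k : ℕ) : ℕ :=
  sSup {m | ∃ E : Finset (Finset (Fin n)),
    Uniform E r ∧ Connected E ∧ BPFree E k ∧ E.card = m}

def IsBergeCycle {n : ℕ} (E : Finset (Finset (Fin n))) (k : ℕ)
    (v : Fin k → Fin n) (f : Fin k → Finset (Fin n)) : Prop :=
  Function.Injective v ∧ Function.Injective f ∧ (∀ i, f i ∈ E) ∧
    ∀ i : Fin k, v i ∈ f i ∧ v ⟨(i.val + 1) % k, Nat.mod_lt _ i.pos⟩ ∈ f i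

open Finset Relation

section Hypergraph

variable {α : Type*} [DecidableEq α]

def Adj (E : Finset (Finset α)) (e f : Finset α) : Prop :=
  e ∈ E ∧ f ∈ E ∧ (e ∩ f).Nonempty

def EdgeConnected (E : Finset (Finset α)) : Prop :=
  ∀ e ∈ E, ∀ f ∈ E, ReflTransGen (Adj E) e f

def Link (E : Finset (Finset α)) (u w : α) : Prop :=
  ∃ e ∈ E, u ∈ e ∧ w ∈ e

instance (E : Finset (Finset α)) : Std.Symm (Link E) :=
  ⟨fun _ _ ⟨e, he, hu, hw⟩ => ⟨e, he, hw, hu⟩⟩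

/-- The core of a Berge path of length 4: when edges have at least four vertices, the two end
vertices can always be added. -/
def FourChainFree (E : Finset (Finset α)) : Prop :=
  ∀ ⦃e₁ e₂ e₃ e₄ : Finset α⦄ ⦃x y z : α⦄, e₁ ∈ E → e₂ ∈ E → e₃ ∈ E → e₄ ∈ E →
    [e₁, e₂, e₃, e₄].Nodup → x ∈ e₁ → x ∈ e₂ → y ∈ e₂ → y ∈ e₃ → z ∈ e₃ → z ∈ e₄ →
    [x, y, z].Nodup → False

structure LinkedTriple (E : Finset (Finset α)) (c₁ c₂ c₃ : Finset α) (x y : α) : Prop where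
  mem₁ : c₁ ∈ E
  mem₂ : c₂ ∈ E
  mem₃ : c₃ ∈ E
  ne₁₂ : c₁ ≠ c₂
  ne₁₃ : c₁ ≠ c₃
  ne₂₃ : c₂ ≠ c₃
  x_mem₁ : x ∈ c₁
  x_mem₂ : x ∈ c₂
  y_mem₂ : y ∈ c₂
  y_mem₃ : y ∈ c₃
  x_ne_y : x ≠ y

def IsHub (E : Finset (Finset α)) (d : Finset α) : Prop :=
  ∀ e ∈ E, ∀ f ∈ E, e ≠ d → f ≠ d → e ≠ f → e ∩ f ⊆ d

theorem exists_mem_notMem_ne_of_ne {r : ℕ} {s t u : Finset α} (hst : s ≠ t) (hs : #s = r)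
    (ht : #t = r) (hu : #u < r) : ∃ a ∈ s, ∃ b ∈ t, a ∉ u ∧ b ∉ u ∧ a ≠ b := by
  obtain ⟨a, has, hau⟩ := exists_mem_notMem_of_card_lt_card (hs ▸ hu)
  by_contra! h
  have hsub : ∀ v ∈ s ∪ t, v ∈ insert a u := by
    intro v hv
    rw [mem_insert]
    by_contra! hv'
    rcases mem_union.1 hv with hvs | hvt
    · obtain ⟨b, hbt, hbu⟩ := exists_mem_notMem_of_card_lt_card (ht ▸ hu)
      exact hv'.1 ((h v hvs b hbt hv'.2 hbu).trans (h a has b hbt hau hbu).symm)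
    · exact hv'.1 (h a has v hvt hau hv'.2).symm
  have hcard : #(s ∪ t) ≤ r := (card_le_card hsub).trans ((card_insert_le _ _).trans hu)
  exact hst (eq_of_subset_of_card_le subset_union_left (hcard.trans hs.ge) |>.trans
    (eq_of_subset_of_card_le subset_union_right (hcard.trans ht.ge)).symm)

theorem fourChainFree_of_bpFree {n r : ℕ} {E : Finset (Finset (Fin n))} (hr : 4 ≤ r)
    (hu : Uniform E r) (hf : BPFree E 4) : FourChainFree E := by
  intro e₁ e₂ e₃ e₄ x y z h₁ h₂ h₃ h₄ he hx₁ hx₂ hy₂ hy₃ hz₃ hz₄ hxyz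
  obtain ⟨a, ha, b, hb, hau, hbu, hab⟩ :=
    exists_mem_notMem_ne_of_ne (by grind -ext : e₁ ≠ e₄) (hu _ h₁) (hu _ h₄)
      (card_le_three.trans_lt (by omega) : #({x, y, z} : Finset (Fin n)) < r)
  have hv : [a, x, y, z, b].Nodup := by grind -ext
  refine hf ⟨![a, x, y, z, b], ![e₁, e₂, e₃, e₄], ?_, ?_, ?_, ?_⟩
  · simpa [← List.nodup_ofFn, List.ofFn_succ] using hv
  · simpa [← List.nodup_ofFn, List.ofFn_succ] using he
  · intro i
    fin_cases i <;> assumption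
  · intro i
    fin_cases i <;> exact ⟨‹_›, ‹_›⟩

theorem reflTransGen_link_of_connected {n : ℕ} {E : Finset (Finset (Fin n))} (hc : Connected E)
    (x y : Fin n) : ReflTransGen (Link E) x y := by
  obtain ⟨k, v, f, ⟨-, -, hfE, hvf⟩, ⟨i, rfl⟩, ⟨j, rfl⟩⟩ := hc x y
  have hfrom0 : ∀ a, ReflTransGen (Link E) (v 0) (v a) := by
    intro a
    induction a using Fin.induction with
    | zero => exact .refl
    | succ i ih => exact ih.tail ⟨f i, hfE i, hvf i⟩
  exact (symm (hfrom0 i)).trans (hfrom0 j)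

theorem exists_reflTransGen_adj_of_link {E : Finset (Finset α)} {u w : α} {e : Finset α}
    (h : ReflTransGen (Link E) u w) (he : e ∈ E) (hu : u ∈ e) :
    ∃ g ∈ E, w ∈ g ∧ ReflTransGen (Adj E) e g := by
  induction h with
  | refl => exact ⟨e, he, hu, .refl⟩
  | tail _ hlink ih =>
    obtain ⟨g, hg, hvg, heg⟩ := ih
    obtain ⟨g', hg', hvg', hwg'⟩ := hlink
    exact ⟨g', hg', hwg', heg.tail ⟨hg, hg', _, mem_inter.2 ⟨hvg, hvg'⟩⟩⟩

theorem edgeConnected_of_connected {n : ℕ} {E : Finset (Finset (Fin n))}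
    (hne : ∀ e ∈ E, e.Nonempty) (hc : Connected E) : EdgeConnected E := by
  intro e he f hf
  obtain ⟨x, hx⟩ := hne e he
  obtain ⟨y, hy⟩ := hne f hf
  obtain ⟨g, hg, hyg, heg⟩ :=
    exists_reflTransGen_adj_of_link (reflTransGen_link_of_connected hc x y) he hx
  exact heg.tail ⟨hg, hf, y, mem_inter.2 ⟨hyg, hy⟩⟩

theorem exists_adj_ne_of_edgeConnected {E : Finset (Finset α)} (hconn : EdgeConnected E)
    (hm : 2 ≤ #E) : ∃ p ∈ E, ∃ q ∈ E, p ≠ q ∧ (p ∩ q).Nonempty := by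
  obtain ⟨e, he, f, hf, hef⟩ := one_lt_card.1 hm
  induction hconn e he f hf with
  | refl => exact absurd rfl hef
  | @tail g g' _ hadj ih =>
    by_cases hgg' : g = g'
    · exact ih hadj.1 (hgg' ▸ hef)
    · exact ⟨g, hadj.1, g', hadj.2.1, hgg', hadj.2.2⟩

section NoLinkedTriple

variable {E : Finset (Finset α)}

theorem forall_mem_of_forall_not_linkedTriple
    (hA : ∀ c₁ c₂ c₃ x y, ¬ LinkedTriple E c₁ c₂ c₃ x y) (hconn : EdgeConnected E) {p q : Finset α}
    (hp : p ∈ E) (hq : q ∈ E) (hpq : p ≠ q) {t : α} (ht : t ∈ p ∩ q) : ∀ e ∈ E, t ∈ e := by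
  intro e he
  induction hconn q hq e he with
  | refl => exact (mem_inter.1 ht).2
  | @tail g g' _ hadj ih =>
    obtain ⟨hg, hg', u, hu⟩ := hadj
    have htg := ih hg
    by_cases hgg' : g = g'
    · exact hgg' ▸ htg
    -- `t` lies in `g` and in another edge `l`, so the link `u` of `g` and `g'` must be `t`
    obtain ⟨l, hl, hlg, htl⟩ : ∃ l ∈ E, l ≠ g ∧ t ∈ l := by
      by_cases hpg : p = g
      · exact ⟨q, hq, hpg ▸ hpq.symm, (mem_inter.1 ht).2⟩
      · exact ⟨p, hp, hpg, (mem_inter.1 ht).1⟩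
    by_cases hlg' : l = g'
    · exact hlg' ▸ htl
    by_contra htg'
    exact hA l g g' t u ⟨hl, hg, hg', hlg, hlg', hgg', htl, htg, (mem_inter.1 hu).1,
      (mem_inter.1 hu).2, fun h => htg' (h ▸ (mem_inter.1 hu).2)⟩

theorem isHub_of_forall_not_linkedTriple
    (hA : ∀ c₁ c₂ c₃ x y, ¬ LinkedTriple E c₁ c₂ c₃ x y) {t : α} (ht : ∀ e ∈ E, t ∈ e)
    {d : Finset α} (hd : d ∈ E) : IsHub E d := by
  intro e he f hf hed hfd hef v hv
  by_contra hvd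
  exact hA d e f t v ⟨hd, he, hf, hed.symm, hfd.symm, hef, ht d hd, ht e he,
    (mem_inter.1 hv).1, (mem_inter.1 hv).2, fun h => hvd (h ▸ ht d hd)⟩

end NoLinkedTriple

namespace LinkedTriple

variable {E : Finset (Finset α)} {c₁ c₂ c₃ h h' : Finset α} {x y : α}

theorem inter_subset_mid (T : LinkedTriple E c₁ c₂ c₃ x y) (hE : FourChainFree E)
    (hh : h ∈ E \ {c₁, c₂, c₃}) : h ∩ c₁ ⊆ c₂ ∧ h ∩ c₃ ⊆ c₂ := by
  obtain ⟨hc₁, hc₂, hc₃, h₁₂, h₁₃, h₂₃, hx₁, hx₂, hy₂, hy₃, hxy⟩ := T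
  simp only [mem_sdiff, mem_insert, mem_singleton, not_or] at hh
  constructor <;> intro a ha <;> by_contra ha₂ <;> rw [mem_inter] at ha
  · exact hE hh.1 hc₁ hc₂ hc₃ (by grind -ext) ha.1 ha.2 hx₁ hx₂ hy₂ hy₃ (by grind -ext)
  · exact hE hh.1 hc₃ hc₂ hc₁ (by grind -ext) ha.1 ha.2 hy₃ hy₂ hx₂ hx₁ (by grind -ext)

theorem disjoint_of_mem_inter (T : LinkedTriple E c₁ c₂ c₃ x y) (hE : FourChainFree E)
    (hh : h ∈ E \ {c₁, c₂, c₃}) (hh' : h' ∈ E \ {c₁, c₂, c₃}) (hne : h ≠ h') {w : α}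
    (hw : w ∈ h ∩ h') (hw₂ : w ∉ c₂) : Disjoint h c₂ := by
  obtain ⟨hc₁, hc₂, hc₃, h₁₂, h₁₃, h₂₃, hx₁, hx₂, hy₂, hy₃, hxy⟩ := T
  simp only [mem_sdiff, mem_insert, mem_singleton, not_or] at hh hh'
  rw [mem_inter] at hw
  rw [disjoint_left]
  intro b hb hb₂
  by_cases hbx : b = x
  · exact hE hh'.1 hh.1 hc₂ hc₃ (by grind -ext) hw.2 hw.1 (hbx ▸ hb) hx₂ hy₂ hy₃
      (by grind -ext)
  · exact hE hh'.1 hh.1 hc₂ hc₁ (by grind -ext) hw.2 hw.1 hb hb₂ hx₂ hx₁ (by grind -ext)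

theorem not_disjoint_mid (T : LinkedTriple E c₁ c₂ c₃ x y) (hE : FourChainFree E)
    (hconn : EdgeConnected E) (hh : h ∈ E \ {c₁, c₂, c₃}) : ¬ Disjoint h c₂ := by
  intro hdis
  -- the edges reachable from `h` stay outside the triple and disjoint from `c₂`, yet reach `c₂`
  have hreach : ∀ k, ReflTransGen (Adj E) h k → k ∈ E \ {c₁, c₂, c₃} ∧ Disjoint k c₂ := by
    intro k hk
    induction hk with
    | refl => exact ⟨hh, hdis⟩
    | @tail k k' _ hadj ih =>
      obtain ⟨hk, hk₂⟩ := ih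
      obtain ⟨-, hk', w, hw⟩ := hadj
      by_cases hkk' : k = k'
      · exact hkk' ▸ ⟨hk, hk₂⟩
      have hw₂ : w ∉ c₂ := disjoint_left.1 hk₂ (mem_inter.1 hw).1
      have hk'out : k' ∈ E \ {c₁, c₂, c₃} := by
        obtain ⟨hk₁, hk₃⟩ := T.inter_subset_mid hE hk
        simp only [mem_sdiff, mem_insert, mem_singleton, not_or]
        refine ⟨hk', ?_, ?_, ?_⟩ <;> rintro rfl
        · exact hw₂ (hk₁ hw)
        · exact hw₂ (mem_inter.1 hw).2
        · exact hw₂ (hk₃ hw)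
      exact ⟨hk'out, T.disjoint_of_mem_inter hE hk'out hk (Ne.symm hkk')
        (by rwa [inter_comm]) hw₂⟩
  exact disjoint_left.1 (hreach c₂ (hconn h (mem_sdiff.1 hh).1 c₂ T.mem₂)).2 T.x_mem₂ T.x_mem₂

theorem inter_subset_of_mem_sdiff (T : LinkedTriple E c₁ c₂ c₃ x y) (hE : FourChainFree E)
    (hconn : EdgeConnected E) (hh : h ∈ E \ {c₁, c₂, c₃}) (hh' : h' ∈ E \ {c₁, c₂, c₃})
    (hne : h ≠ h') : h ∩ h' ⊆ c₂ := by
  intro w hw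
  by_contra hw₂
  exact T.not_disjoint_mid hE hconn hh (T.disjoint_of_mem_inter hE hh hh' hne hw hw₂)

theorem inter_ends_subset_mid (T : LinkedTriple E c₁ c₂ c₃ x y) (hE : FourChainFree E)
    (hconn : EdgeConnected E) (hh : h ∈ E \ {c₁, c₂, c₃}) : c₁ ∩ c₃ ⊆ c₂ := by
  obtain ⟨b, hb⟩ := not_disjoint_iff_nonempty_inter.1 (T.not_disjoint_mid hE hconn hh)
  obtain ⟨hc₁, hc₂, hc₃, h₁₂, h₁₃, h₂₃, hx₁, hx₂, hy₂, hy₃, hxy⟩ := T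
  simp only [mem_sdiff, mem_insert, mem_singleton, not_or] at hh
  rw [mem_inter] at hb
  intro z hz
  by_contra hz₂
  rw [mem_inter] at hz
  by_cases hbx : b = x
  · exact hE hh.1 hc₂ hc₃ hc₁ (by grind -ext) hb.1 hb.2 hy₂ hy₃ hz.2 hz.1 (by grind -ext)
  · exact hE hh.1 hc₂ hc₁ hc₃ (by grind -ext) hb.1 hb.2 hx₂ hx₁ hz.1 hz.2 (by grind -ext)

theorem isHub (T : LinkedTriple E c₁ c₂ c₃ x y) (hE : FourChainFree E)
    (hconn : EdgeConnected E) (hm : 4 ≤ #E) : IsHub E c₂ := by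
  obtain ⟨h, hh⟩ : (E \ {c₁, c₂, c₃}).Nonempty := by
    rw [← card_pos]
    have := le_card_sdiff {c₁, c₂, c₃} E
    have : #({c₁, c₂, c₃} : Finset (Finset α)) ≤ 3 := card_le_three
    omega
  have hcases : ∀ e ∈ E, e ≠ c₂ → e = c₁ ∨ e = c₃ ∨ e ∈ E \ {c₁, c₂, c₃} := by
    intro e he he₂
    simp only [mem_sdiff, mem_insert, mem_singleton, not_or]
    tauto
  have h₁₃ := T.inter_ends_subset_mid hE hconn hh
  intro e he f hf he₂ hf₂ hef
  rcases hcases e he he₂ with rfl | rfl | he' <;> rcases hcases f hf hf₂ with rfl | rfl | hf'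
  · exact absurd rfl hef
  · exact h₁₃
  · exact inter_comm f e ▸ (T.inter_subset_mid hE hf').1
  · exact inter_comm f e ▸ h₁₃
  · exact absurd rfl hef
  · exact inter_comm f e ▸ (T.inter_subset_mid hE hf').2
  · exact (T.inter_subset_mid hE he').1
  · exact (T.inter_subset_mid hE he').2
  · exact T.inter_subset_of_mem_sdiff hE hconn he' hf' hef

end LinkedTriple

theorem exists_isHub {E : Finset (Finset α)} (hE : FourChainFree E) (hconn : EdgeConnected E)
    (hm : 4 ≤ #E) : ∃ d ∈ E, IsHub E d := by
  by_cases hT : ∃ c₁ c₂ c₃ x y, LinkedTriple E c₁ c₂ c₃ x y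
  · obtain ⟨c₁, c₂, c₃, x, y, T⟩ := hT
    exact ⟨c₂, T.mem₂, T.isHub hE hconn hm⟩
  · simp only [not_exists] at hT
    obtain ⟨p, hp, q, hq, hpq, t, ht⟩ := exists_adj_ne_of_edgeConnected hconn (by omega)
    obtain ⟨d, hd⟩ := card_pos.1 (by omega : 0 < #E)
    exact ⟨d, hd, isHub_of_forall_not_linkedTriple hT
      (forall_mem_of_forall_not_linkedTriple hT hconn hp hq hpq ht) hd⟩

theorem card_mul_le_card_biUnion_add {E : Finset (Finset α)} {r : ℕ} (hu : ∀ e ∈ E, #e = r)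
    {d : Finset α} (hd : d ∈ E) (hH : IsHub E d) :
    #E * r ≤ #(E.biUnion id) + ∑ e ∈ E.erase d, #(e ∩ d) := by
  have hdisj : (E.erase d : Set (Finset α)).PairwiseDisjoint (· \ d) := by
    intro e he f hf hef
    rw [Function.onFun, disjoint_left]
    intro v hve hvf
    rw [mem_sdiff] at hve hvf
    exact hve.2 (hH e (mem_of_mem_erase he) f (mem_of_mem_erase hf) (ne_of_mem_erase he)
      (ne_of_mem_erase hf) hef (mem_inter.2 ⟨hve.1, hvf.1⟩))
  have hsub : d ∪ (E.erase d).biUnion (· \ d) ⊆ E.biUnion id := by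
    refine union_subset (subset_biUnion_of_mem id hd) (biUnion_subset.2 fun e he => ?_)
    exact sdiff_subset.trans (subset_biUnion_of_mem id (mem_of_mem_erase he))
  have hdisj' : Disjoint d ((E.erase d).biUnion (· \ d)) := by
    simp only [disjoint_biUnion_right]
    exact fun _ _ => disjoint_sdiff
  calc #E * r = ∑ e ∈ E.erase d, #e + #d := by
        rw [sum_erase_add _ _ hd, sum_congr rfl hu, sum_const, smul_eq_mul]
    _ = #(d ∪ (E.erase d).biUnion (· \ d)) + ∑ e ∈ E.erase d, #(e ∩ d) := by
        rw [card_union_of_disjoint hdisj', card_biUnion hdisj,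
          sum_congr rfl fun e _ => (card_sdiff_add_card_inter e d).symm, sum_add_distrib]
        ring
    _ ≤ #(E.biUnion id) + ∑ e ∈ E.erase d, #(e ∩ d) := by gcongr

theorem card_inter_lt_of_ne {r : ℕ} {e d : Finset α} (he : #e = r) (hd : #d = r) (hne : e ≠ d) :
    #(e ∩ d) < r := by
  have hed : ¬ e ⊆ d := fun h => hne (eq_of_subset_of_card_le h (by omega))
  exact he ▸ card_lt_card (Finset.ssubset_iff_subset_ne.2
    ⟨inter_subset_left, mt inter_eq_left.1 hed⟩)

theorem sum_card_inter_le_card_add_card {H : Finset (Finset α)} (d : Finset α)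
    (hH : ∀ h ∈ H, ∀ h₁ ∈ H, ∀ h₂ ∈ H, h₁ ≠ h → h₂ ≠ h → ∀ a ∈ h ∩ h₁, ∀ b ∈ h ∩ h₂, a = b) :
    ∑ h ∈ H, #(h ∩ d) ≤ #d + #H := by
  set P : Finset α → Finset α := fun h => {v ∈ h ∩ d | ∀ h' ∈ H, h' ≠ h → v ∉ h'}
  have hdisj : (H : Set (Finset α)).PairwiseDisjoint P := by
    intro h _ h' hh' hne
    rw [Function.onFun, disjoint_left]
    intro v hv hv'
    exact (mem_filter.1 hv).2 h' hh' (Ne.symm hne) (mem_inter.1 (mem_filter.1 hv').1).1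
  have hsub : H.biUnion P ⊆ d :=
    biUnion_subset.2 fun h _ => (filter_subset _ _).trans inter_subset_right
  -- by `hH`, at most one vertex of `h ∩ d` lies in another member of `H`
  have hle : ∀ h ∈ H, #(h ∩ d) ≤ #(P h) + 1 := by
    intro h hh
    rw [← card_filter_add_card_filter_not (s := h ∩ d) (fun v => ∀ h' ∈ H, h' ≠ h → v ∉ h')]
    refine add_le_add_right (card_le_one.2 fun a ha b hb => ?_) _
    simp only [mem_filter, not_forall, not_not] at ha hb
    obtain ⟨ha, h₁, hh₁, hne₁, ha₁⟩ := ha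
    obtain ⟨hb, h₂, hh₂, hne₂, hb₂⟩ := hb
    exact hH h hh h₁ hh₁ h₂ hh₂ hne₁ hne₂ a (mem_inter.2 ⟨(mem_inter.1 ha).1, ha₁⟩) b
      (mem_inter.2 ⟨(mem_inter.1 hb).1, hb₂⟩)
  calc ∑ h ∈ H, #(h ∩ d) ≤ ∑ h ∈ H, (#(P h) + 1) := sum_le_sum hle
    _ = #(H.biUnion P) + #H := by rw [sum_add_distrib, card_biUnion hdisj, card_eq_sum_ones]
    _ ≤ #d + #H := by grw [card_le_card hsub]

theorem FourChainFree.link_eq_of_heavy {E : Finset (Finset α)} (hE : FourChainFree E)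
    {d : Finset α} (hd : d ∈ E) {H : Finset (Finset α)} (hHE : H ⊆ E.erase d)
    (hheavy : ∀ h ∈ H, 3 ≤ #(h ∩ d)) (hH : 3 ≤ #H) :
    ∀ h ∈ H, ∀ h₁ ∈ H, ∀ h₂ ∈ H, h₁ ≠ h → h₂ ≠ h → ∀ a ∈ h ∩ h₁, ∀ b ∈ h ∩ h₂, a = b := by
  have hmem : ∀ k ∈ H, k ∈ E ∧ k ≠ d := fun k hk => (mem_erase.1 (hHE hk)).symm
  intro h hh h₁ hh₁ h₂ hh₂ hne₁ hne₂ a ha b hb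
  by_contra hab
  rw [mem_inter] at ha hb
  obtain ⟨hhE, hhd⟩ := hmem h hh
  obtain ⟨hh₁E, hh₁d⟩ := hmem h₁ hh₁
  obtain ⟨hh₂E, hh₂d⟩ := hmem h₂ hh₂
  by_cases h₁₂ : h₁ = h₂
  · -- `h` and `h₁` share two vertices: a third heavy edge `h₃` leads into `d`, then into `h`
    subst h₁₂
    obtain ⟨h₃, hh₃, hh₃'⟩ := exists_mem_notMem_of_card_lt_card
      (card_le_two.trans_lt hH : #({h, h₁} : Finset (Finset α)) < #H)
    obtain ⟨hh₃E, hh₃d⟩ := hmem h₃ hh₃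
    obtain ⟨c, hc⟩ := card_pos.1 ((by have := hheavy h₃ hh₃; omega) : 0 < #(h₃ ∩ d))
    obtain ⟨z, hz, hzc⟩ : ∃ z ∈ h ∩ h₁, z ≠ c := by
      by_cases hac : a = c
      · exact ⟨b, mem_inter.2 hb, fun hbc => hab (hac.trans hbc.symm)⟩
      · exact ⟨a, mem_inter.2 ha, hac⟩
    obtain ⟨v, hv, hv'⟩ := exists_mem_notMem_of_card_lt_card
      (card_le_two.trans_lt (hheavy h hh) : #({c, z} : Finset α) < #(h ∩ d))
    rw [mem_inter] at hc hz hv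
    exact hE hh₃E hd hhE hh₁E (by grind -ext) hc.1 hc.2 hv.2 hv.1 hz.1 hz.2 (by grind -ext)
  · -- otherwise the chain `h₁, h, h₂` leaves `h₂` into `d`
    obtain ⟨c, hc, hc'⟩ := exists_mem_notMem_of_card_lt_card
      (card_le_two.trans_lt (hheavy h₂ hh₂) : #({a, b} : Finset α) < #(h₂ ∩ d))
    rw [mem_inter] at hc
    exact hE hh₁E hhE hh₂E hd (by grind -ext) ha.2 ha.1 hb.1 hb.2 hc.1 hc.2 (by grind -ext)

theorem FourChainFree.sum_card_inter_add_le {E : Finset (Finset α)} (hE : FourChainFree E)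
    {r : ℕ} (hu : ∀ e ∈ E, #e = r) (hr : 3 ≤ r) {d : Finset α} (hd : d ∈ E) :
    ∑ e ∈ E.erase d, #(e ∩ d) + 8 ≤ 2 * #E + 2 * r := by
  have hcard := card_filter_add_card_filter_not (s := E.erase d) fun e => 3 ≤ #(e ∩ d)
  have hcardE := card_erase_add_one hd
  rw [← sum_filter_add_sum_filter_not (E.erase d) fun e => 3 ≤ #(e ∩ d)]
  set H := (E.erase d).filter fun e => 3 ≤ #(e ∩ d)
  set L := (E.erase d).filter fun e => ¬ 3 ≤ #(e ∩ d)
  have hL : ∑ e ∈ L, #(e ∩ d) ≤ #L * 2 :=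
    sum_le_card_nsmul _ _ _ fun e he => by have := (mem_filter.1 he).2; omega
  have hHr : ∑ e ∈ H, #(e ∩ d) ≤ #H * (r - 1) := by
    refine sum_le_card_nsmul _ _ _ fun e he => ?_
    obtain ⟨hed, he⟩ := mem_erase.1 (mem_filter.1 he).1
    have := card_inter_lt_of_ne (hu e he) (hu d hd) hed
    omega
  rcases le_or_gt #H 2 with hH | hH
  · have : #H * (r - 1) = #H * (r - 3) + #H * 2 := by
      rw [← mul_add]
      congr 1
      omega
    have := Nat.mul_le_mul_right (r - 3) hH
    omega
  · have : ∑ e ∈ H, #(e ∩ d) ≤ #d + #H := sum_card_inter_le_card_add_card d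
      (hE.link_eq_of_heavy hd (filter_subset _ _) (fun h hh => (mem_filter.1 hh).2) hH)
    rw [hu d hd] at this
    omega

theorem card_mul_add_le_card_biUnion_add {E : Finset (Finset α)} (hE : FourChainFree E)
    (hconn : EdgeConnected E) {r : ℕ} (hu : ∀ e ∈ E, #e = r) (hr : 3 ≤ r) (hm : 4 ≤ #E) :
    #E * r + 8 ≤ #(E.biUnion id) + 2 * #E + 2 * r := by
  obtain ⟨d, hd, hH⟩ := exists_isHub hE hconn hm
  have := card_mul_le_card_biUnion_add hu hd hH
  have := hE.sum_card_inter_add_le hu hr hd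
  omega


end Hypergraph

theorem stmt4 (r n : ℕ) (hr : 4 ≤ r) (hn : r + 5 ≤ n)
    (E : Finset (Finset (Fin n))) (hu : Uniform E r) (hc : Connected E)
    (hf : BPFree E 4) :
    (E.card : ℚ) ≤ max (((n : ℚ) - 5) / ((r : ℚ) - 1) + 3)
      (((n : ℚ) - 4) / ((r : ℚ) - 2) + 2) := by
  have hcount : #E * r + 8 ≤ n + 2 * #E + 2 * r := by
    rcases le_or_gt #E 3 with hm | hm
    · nlinarith
    · have hne : ∀ e ∈ E, e.Nonempty := fun e he => card_pos.1 (by rw [hu e he]; omega)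
      have := card_mul_add_le_card_biUnion_add (fourChainFree_of_bpFree hr hu hf)
        (edgeConnected_of_connected hne hc) hu (by omega) hm
      have : #(E.biUnion id) ≤ n := (card_le_univ _).trans_eq (Fintype.card_fin n)
      omega
  have hr2 : (0 : ℚ) < r - 2 := by
    have : (4 : ℚ) ≤ r := by exact_mod_cast hr
    linarith
  refine le_max_of_le_right ?_
  rw [← sub_le_iff_le_add, le_div_iff₀ hr2]
  have : ((#E * r + 8 : ℕ) : ℚ) ≤ ((n + 2 * #E + 2 * r : ℕ) : ℚ) := by exact_mod_cast hcount
  push_cast at this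
  nlinarith

end Berge
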